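/- arXiv:1301.4269 — 9 statements merged into one kernel-verified Lean document; each statement's English description precedes it below -/
import Mathlib

section
/- Let p be a prime, D an integer with 1 ≤ D < p, and let A_1, …, A_k be (not necessarily distinct) D-APs in Z_p. Then the sumset satisfies |Σ_{i=1}^k A_i| = min{p, Σ_{i=1}^k |A_i| − k + 1}. -/
open Pointwise

/-- The (maximal, no wrap-around) `D`-AP in `ℤ_p` with base `b`:
`{b, b + D, b + 2D, …, b + ⌊(p − 1 − b)/D⌋ · D} ⊆ ℤ_p`. -/
def dAP (p D b : ℕ) : Finset (ZMod p) :=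
  (Finset.range ((p - 1 - b) / D + 1)).image (fun i => ((b + i * D : ℕ) : ZMod p))

/-!
A `D`-AP with base `b` and `m` elements is the translate `b + D · {0, …, m - 1}` of a dilated
initial segment of `ℕ`, read in `ℤ_p`. Sums of initial segments are initial segments,
`{0, …, m - 1} + {0, …, n - 1} = {0, …, m + n - 2}`, so the sumset is a translate of
`D · {0, …, Σ mᵢ - k}`. As `D` is a unit of `ℤ_p`, this has as many elements as the image of
`{0, …, Σ mᵢ - k}` in `ℤ_p`, namely `min p (Σ mᵢ - k + 1)`.
-/

open Finset

lemma range_add_range {m n : ℕ} (hm : m ≠ 0) (hn : n ≠ 0) :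
    range m + range n = range (m + n - 1) := by
  ext x
  simp only [mem_add, mem_range]
  constructor
  · rintro ⟨a, ha, b, hb, rfl⟩
    omega
  · exact fun hx => ⟨min x (m - 1), by omega, x - min x (m - 1), by omega, by omega⟩

lemma sum_range_eq_range {ι : Type*} (s : Finset ι) (m : ι → ℕ)
    (hm : ∀ i ∈ s, m i ≠ 0) :
    ∑ i ∈ s, range (m i) = range (∑ i ∈ s, m i - #s + 1) := by
  induction s using Finset.cons_induction with
  | empty => rfl
  | cons a s ha ih =>
    have hs : ∀ i ∈ s, m i ≠ 0 := fun i hi => hm i (mem_cons_of_mem hi)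
    have hma := hm a (mem_cons_self a s)
    have hcard : #s ≤ ∑ i ∈ s, m i :=
      card_eq_sum_ones s ▸ sum_le_sum fun i hi => Nat.one_le_iff_ne_zero.2 (hs i hi)
    rw [sum_cons, sum_cons, ih hs, range_add_range hma (by omega), card_cons]
    congr 1
    omega

lemma sum_singleton_add_image {ι α β : Type*} [AddCommMonoid α] [AddCommMonoid β]
    [DecidableEq α] [DecidableEq β] (s : Finset ι) (b : ι → β) (f : α →+ β)
    (X : ι → Finset α) :
    ∑ i ∈ s, ({b i} + (X i).image f) = {∑ i ∈ s, b i} + (∑ i ∈ s, X i).image f := by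
  rw [sum_add_distrib, ← singletonAddMonoidHom_apply, map_sum]
  exact congrArg _ (map_sum (imageAddMonoidHom f) X s).symm

lemma card_image_natCast_range (p n : ℕ) [NeZero p] :
    #((range n).image (Nat.cast : ℕ → ZMod p)) = min p n := by
  rcases le_total n p with h | h
  · rw [min_eq_right h, card_image_of_injOn, card_range]
    exact (CharP.natCast_injOn_Iio (ZMod p) p).mono fun i hi => by
      simp only [coe_range, Set.mem_Iio] at hi ⊢
      omega
  · have hx (x : ZMod p) : x ∈ (range n).image Nat.cast :=
      mem_image.2 ⟨x.val, mem_range.2 (x.val_lt.trans_le h), ZMod.natCast_zmod_val x⟩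
    rw [min_eq_left h, eq_univ_of_forall hx, card_univ, ZMod.card]

lemma card_image_multiplesHom_range {p : ℕ} [Fact p.Prime] {d : ZMod p} (hd : d ≠ 0) (n : ℕ) :
    #((range n).image (multiplesHom (ZMod p) d)) = min p n := by
  have h : (range n).image (multiplesHom (ZMod p) d) =
      ((range n).image Nat.cast).image (· * d) := by
    rw [image_image]
    congr 1
    funext i
    simp [nsmul_eq_mul]
  rw [h, card_image_of_injective _ (mul_left_injective₀ hd), card_image_natCast_range]

lemma dAP_eq_singleton_add (p D b : ℕ) :
    dAP p D b =
      {(b : ZMod p)} + (range ((p - 1 - b) / D + 1)).image (multiplesHom (ZMod p) D) := by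
  rw [singleton_add, vadd_finset_def, image_image, dAP]
  congr 1
  funext i
  simp [nsmul_eq_mul]

lemma card_dAP {p D : ℕ} [Fact p.Prime] (hD : (D : ZMod p) ≠ 0) (b : ℕ) :
    #(dAP p D b) = (p - 1 - b) / D + 1 := by
  have := Nat.div_le_self (p - 1 - b) D
  have := (Fact.out : p.Prime).pos
  rw [dAP_eq_singleton_add, card_singleton_add, card_image_multiplesHom_range hD, min_eq_right]
  omega

/-- For `D`-APs `A 1, …, A k` in `ℤ_p` (`p` prime, `1 ≤ D < p`),
`|A 1 + ⋯ + A k| = min {p, |A 1| + ⋯ + |A k| − k + 1}`. -/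
theorem sumset_card_of_dAPs (p : ℕ) [Fact p.Prime] (D : ℕ) (hD1 : 1 ≤ D) (hDp : D < p)
    (k : ℕ) (A : Fin k → Finset (ZMod p)) (hA : ∀ i, ∃ b < D, A i = dAP p D b) :
    (∑ i, A i).card = min p (∑ i, (A i).card - k + 1) := by
  have hD : (D : ZMod p) ≠ 0 := by
    rw [Ne, ZMod.natCast_eq_zero_iff]
    exact Nat.not_dvd_of_pos_of_lt hD1 hDp
  choose b _ hAb using hA
  calc #(∑ i, A i)
      = #({∑ i, (b i : ZMod p)} +
          (∑ i, range ((p - 1 - b i) / D + 1)).image (multiplesHom (ZMod p) D)) := by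
        simp only [hAb, dAP_eq_singleton_add, sum_singleton_add_image]
    _ = min p (∑ i, #(A i) - k + 1) := by
        rw [card_singleton_add, sum_range_eq_range _ _ fun i _ => Nat.add_one_ne_zero _,
          card_image_multiplesHom_range hD, card_univ, Fintype.card_fin]
        simp only [hAb, card_dAP hD]
end

section
/- Let p be a prime, D an integer with 1 ≤ D < p, and let A_1, …, A_k be D-APs in Z_p. Then the sumset Σ_{i=1}^k A_i is contiguous relative to D. -/
open Pointwise

/-- The distance between `g₀, g₁ ∈ ℤ_p` relative to `p, D`:
`min {(g₁ − g₀)·D⁻¹ mod p, (g₀ − g₁)·D⁻¹ mod p}`, each term viewed as an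
integer in `{0, …, p − 1}`. -/
def distPD (p D : ℕ) (g₀ g₁ : ZMod p) : ℕ :=
  min (((g₁ - g₀) * (D : ZMod p)⁻¹).val) (((g₀ - g₁) * (D : ZMod p)⁻¹).val)

/-- A set `A ⊆ ℤ_p` is contiguous relative to `D` if its elements can be listed
so that consecutive elements are at distance `1` with respect to `distPD`. -/
def Contiguous (p D : ℕ) (A : Finset (ZMod p)) : Prop :=
  ∃ l : List (ZMod p), l.Nodup ∧ l.toFinset = A ∧
    l.Chain' (fun a b => distPD p D a b = 1)

/-!
Every `D`-AP is an arithmetic progression with common difference `D`, and adding two progressions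
with the same difference gives another one whose length is the sum of the lengths minus one, so the
sumset is a single progression `s, s + D, …`. Since `p • D = 0`, a progression with more than `p`
terms wraps around and equals its first `p` terms; and a progression of at most `p` terms is
listed without repetition in its natural order, where consecutive terms differ by `D` and so are
at distance `1`.
-/

section ArithProg

variable {M : Type*} [AddCommMonoid M] [DecidableEq M]

def arithProg (s d : M) (n : ℕ) : Finset M :=
  (Finset.range n).image fun j => s + j • d

lemma arithProg_add_arithProg (s t d : M) (m n : ℕ) :
    arithProg s d (m + 1) + arithProg t d (n + 1) = arithProg (s + t) d (m + n + 1) := by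
  ext x
  simp only [arithProg, Finset.mem_add, Finset.mem_image, Finset.mem_range]
  constructor
  · rintro ⟨_, ⟨i, hi, rfl⟩, _, ⟨j, hj, rfl⟩, rfl⟩
    exact ⟨i + j, by omega, by rw [add_nsmul]; abel⟩
  · rintro ⟨j, hj, rfl⟩
    refine ⟨_, ⟨min j m, by omega, rfl⟩, _, ⟨j - min j m, by omega, rfl⟩, ?_⟩
    rw [add_add_add_comm, ← add_nsmul, Nat.add_sub_cancel' (min_le_left j m)]

lemma sum_arithProg_succ {ι : Type*} (I : Finset ι) (A : ι → Finset M) (d : M)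
    (hA : ∀ i ∈ I, ∃ s n, A i = arithProg s d (n + 1)) :
    ∃ s n, ∑ i ∈ I, A i = arithProg s d (n + 1) := by
  refine Finset.sum_induction A (fun X => ∃ s n, X = arithProg s d (n + 1)) ?_ ?_ hA
  · rintro _ _ ⟨s, m, rfl⟩ ⟨t, n, rfl⟩
    exact ⟨s + t, m + n, arithProg_add_arithProg s t d m n⟩
  · exact ⟨0, 0, by simp [arithProg, Finset.singleton_zero]⟩

lemma arithProg_eq_arithProg_min (s d : M) {m : ℕ} (hm : 0 < m) (hd : m • d = 0) (n : ℕ) :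
    arithProg s d n = arithProg s d (min n m) := by
  refine le_antisymm ?_ (Finset.image_subset_image (by simp))
  rintro _ hx
  simp only [arithProg, Finset.mem_image, Finset.mem_range] at hx ⊢
  obtain ⟨j, hj, rfl⟩ := hx
  exact ⟨j % m, lt_min (lt_of_le_of_lt (Nat.mod_le j m) hj) (Nat.mod_lt j hm),
    by rw [← nsmul_eq_mod_nsmul j hd]⟩

end ArithProg

lemma dAP_eq_arithProg (p D b : ℕ) :
    dAP p D b = arithProg (b : ZMod p) D ((p - 1 - b) / D + 1) := by
  refine Finset.image_congr fun i _ => ?_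
  simp [nsmul_eq_mul]

section Contiguous

variable {p D : ℕ} [Fact p.Prime]

lemma distPD_self_add (hD : (D : ZMod p) ≠ 0) (x : ZMod p) : distPD p D x (x + D) = 1 := by
  have hp : Fact (1 < p) := ⟨(Fact.out : p.Prime).one_lt⟩
  have hneg : ((-1 : ZMod p)).val ≠ 0 := by simp
  simp only [distPD, add_sub_cancel_left, sub_add_cancel_left, neg_mul,
    mul_inv_cancel₀ hD, ZMod.val_one]
  omega

lemma contiguous_arithProg (hD : (D : ZMod p) ≠ 0) (s : ZMod p) {n : ℕ} (hn : n ≤ p) :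
    Contiguous p D (arithProg s (D : ZMod p) n) := by
  refine ⟨(List.range n).map fun j => s + j • (D : ZMod p), ?_, by ext; simp [arithProg], ?_⟩
  · refine List.nodup_range.map_on fun i hi j hj hij => ?_
    simp only [List.mem_range] at hi hj
    have hcast : (i : ZMod p) = j := by
      simpa [nsmul_eq_mul, mul_left_inj' hD] using hij
    rwa [ZMod.natCast_eq_natCast_iff', Nat.mod_eq_of_lt (by omega),
      Nat.mod_eq_of_lt (by omega)] at hcast
  · refine (List.isChain_map _).2 ((List.isChain_range _ _).2 ?_)
    intro j _
    rw [succ_nsmul, ← add_assoc]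
    exact distPD_self_add hD _

end Contiguous

/-- The sumset of `D`-APs `A 1, …, A k ⊆ ℤ_p` is contiguous relative to `D`. -/
theorem sumset_of_dAPs_contiguous (p : ℕ) [Fact p.Prime] (D : ℕ)
    (hD1 : 1 ≤ D) (hDp : D < p)
    (k : ℕ) (A : Fin k → Finset (ZMod p)) (hA : ∀ i, ∃ b < D, A i = dAP p D b) :
    Contiguous p D (∑ i, A i) := by
  have hD : (D : ZMod p) ≠ 0 := by
    rw [Ne, ZMod.natCast_eq_zero_iff]
    exact Nat.not_dvd_of_pos_of_lt hD1 hDp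
  obtain ⟨s, n, hsum⟩ := sum_arithProg_succ Finset.univ A (D : ZMod p) fun i _ => by
    obtain ⟨b, -, hb⟩ := hA i
    exact ⟨b, _, hb.trans (dAP_eq_arithProg p D b)⟩
  rw [hsum, arithProg_eq_arithProg_min s _ (Fact.out : p.Prime).pos (by simp [nsmul_eq_mul])]
  exact contiguous_arithProg hD s (min_le_right _ _)
end

section
/- Let p be a prime, D an integer with 1 ≤ D < p, and let A_1, …, A_k be D-APs in Z_p. For any g_0, g_1 ∈ Z_p, if dist_{p,D}(g_0, g_1) ≥ |Σ_{i=1}^k A_i|, then g_0 and g_1 are not both contained in Σ_{i=1}^k A_i. -/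
/-!
A sum of `D`-APs is again an arithmetic progression `c, c + D, …, c + m D` with difference `D`.
If `m < p` its `m + 1` terms are distinct, while two terms `c + sD`, `c + tD` are at distance at
most `|t − s| ≤ m`. If `m ≥ p` it is all of `ℤ_p`, and every distance is below `p`. (If `p ∣ D`,
every distance is `0`.)
-/

open Pointwise

def apFinset {G : Type*} [AddCommMonoid G] [DecidableEq G] (c d : G) (m : ℕ) : Finset G :=
  (Finset.range (m + 1)).image fun j => c + j • d

section AddCommMonoid

variable {G : Type*} [AddCommMonoid G] [DecidableEq G]

theorem mem_apFinset {c d x : G} {m : ℕ} : x ∈ apFinset c d m ↔ ∃ j ≤ m, c + j • d = x := by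
  simp [apFinset]

theorem apFinset_add_apFinset (c₁ c₂ d : G) (m₁ m₂ : ℕ) :
    apFinset c₁ d m₁ + apFinset c₂ d m₂ = apFinset (c₁ + c₂) d (m₁ + m₂) := by
  ext x
  simp only [Finset.mem_add, mem_apFinset]
  constructor
  · rintro ⟨_, ⟨j₁, hj₁, rfl⟩, _, ⟨j₂, hj₂, rfl⟩, rfl⟩
    exact ⟨j₁ + j₂, by omega, by rw [add_nsmul]; abel⟩
  · rintro ⟨j, hj, rfl⟩
    refine ⟨_, ⟨min j m₁, min_le_right _ _, rfl⟩, _, ⟨j - min j m₁, by omega, rfl⟩, ?_⟩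
    rw [add_add_add_comm, ← add_nsmul, Nat.add_sub_cancel' (min_le_left _ _)]

theorem sum_apFinset {ι : Type*} (s : Finset ι) (c : ι → G) (d : G) (m : ι → ℕ) :
    ∑ i ∈ s, apFinset (c i) d (m i) = apFinset (∑ i ∈ s, c i) d (∑ i ∈ s, m i) := by
  classical
  induction s using Finset.induction_on with
  | empty => ext x; simp [mem_apFinset, eq_comm]
  | insert i s hi ih => simp only [Finset.sum_insert hi, ih, apFinset_add_apFinset]

end AddCommMonoid

theorem dAP_eq_apFinset (p D b : ℕ) :
    dAP p D b = apFinset (b : ZMod p) (D : ZMod p) ((p - 1 - b) / D) := by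
  unfold dAP apFinset
  refine Finset.image_congr fun j _ => ?_
  simp

theorem distPD_comm (p D : ℕ) (g₀ g₁ : ZMod p) : distPD p D g₀ g₁ = distPD p D g₁ g₀ :=
  min_comm _ _

section ZMod

variable {p : ℕ} [Fact p.Prime]

theorem apFinset_eq_univ {c d : ZMod p} {m : ℕ} (hd : d ≠ 0) (hpm : p ≤ m) :
    apFinset c d m = Finset.univ := by
  refine Finset.eq_univ_of_forall fun x => mem_apFinset.2 ⟨((x - c) / d).val, ?_, ?_⟩
  · exact (ZMod.val_lt _).le.trans hpm
  · rw [nsmul_eq_mul, ZMod.natCast_zmod_val, div_mul_cancel₀ _ hd, add_sub_cancel]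

theorem card_apFinset {c d : ZMod p} {m : ℕ} (hd : d ≠ 0) (hmp : m < p) :
    (apFinset c d m).card = m + 1 := by
  rw [apFinset, Finset.card_image_of_injOn, Finset.card_range]
  intro i hi j hj hij
  simp only [Finset.coe_range, Set.mem_Iio, nsmul_eq_mul, add_right_inj] at hi hj hij
  have := congrArg ZMod.val (mul_right_cancel₀ hd hij)
  rwa [ZMod.val_cast_of_lt (by omega), ZMod.val_cast_of_lt (by omega)] at this

theorem distPD_add_nsmul_le {D j : ℕ} (hD : (D : ZMod p) ≠ 0) (hjp : j < p) (g : ZMod p) :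
    distPD p D g (g + j • (D : ZMod p)) ≤ j := by
  have hquot : (g + j • (D : ZMod p) - g) * (D : ZMod p)⁻¹ = j := by
    rw [add_sub_cancel_left, nsmul_eq_mul, mul_inv_cancel_right₀ hD]
  exact (min_le_left _ _).trans (by rw [hquot, ZMod.val_cast_of_lt hjp])

theorem distPD_lt_card_of_mem {D : ℕ} {c g₀ g₁ : ZMod p} {m : ℕ}
    (h₀ : g₀ ∈ apFinset c D m) (h₁ : g₁ ∈ apFinset c D m) :
    distPD p D g₀ g₁ < (apFinset c D m).card := by
  by_cases hD : (D : ZMod p) = 0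
  · have hdist : distPD p D g₀ g₁ = 0 := by simp [distPD, hD]
    exact hdist ▸ Finset.card_pos.2 ⟨g₀, h₀⟩
  rcases lt_or_ge m p with hmp | hpm
  · rw [card_apFinset hD hmp, Nat.lt_succ_iff]
    obtain ⟨s, hs, rfl⟩ := mem_apFinset.1 h₀
    obtain ⟨t, ht, rfl⟩ := mem_apFinset.1 h₁
    wlog hst : s ≤ t generalizing s t
    · rw [distPD_comm]; exact this t ht h₁ s hs h₀ (by omega)
    have hshift : c + t • (D : ZMod p) = c + s • (D : ZMod p) + (t - s) • (D : ZMod p) := by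
      rw [add_assoc, ← add_nsmul, Nat.add_sub_cancel' hst]
    rw [hshift]
    exact (distPD_add_nsmul_le hD (by omega) _).trans (by omega)
  · rw [apFinset_eq_univ hD hpm, Finset.card_univ, ZMod.card]
    exact (min_le_left _ _).trans_lt (ZMod.val_lt _)

end ZMod

theorem not_both_mem_sumset_of_dAPs_general (p : ℕ) [Fact p.Prime] (D : ℕ)
    (k : ℕ) (A : Fin k → Finset (ZMod p)) (hA : ∀ i, ∃ b < D, A i = dAP p D b)
    (g₀ g₁ : ZMod p) (hdist : (∑ i, A i).card ≤ distPD p D g₀ g₁) :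
    ¬(g₀ ∈ ∑ i, A i ∧ g₁ ∈ ∑ i, A i) := by
  rintro ⟨h₀, h₁⟩
  choose b _ hb using hA
  have hsum : ∑ i, A i = apFinset (∑ i, (b i : ZMod p)) D (∑ i, (p - 1 - b i) / D) := by
    simp only [hb, dAP_eq_apFinset, sum_apFinset]
  rw [hsum] at h₀ h₁ hdist
  exact (distPD_lt_card_of_mem h₀ h₁).not_ge hdist

/-- If `dist_{p,D}(g₀, g₁) ≥ |A 1 + ⋯ + A k|` for `D`-APs `A 1, …, A k ⊆ ℤ_p`,
then `g₀` and `g₁` cannot both lie in the sumset `A 1 + ⋯ + A k`. -/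
theorem not_both_mem_sumset_of_dAPs (p : ℕ) [Fact p.Prime] (D : ℕ)
    (hD1 : 1 ≤ D) (hDp : D < p)
    (k : ℕ) (A : Fin k → Finset (ZMod p)) (hA : ∀ i, ∃ b < D, A i = dAP p D b)
    (g₀ g₁ : ZMod p) (hdist : (∑ i, A i).card ≤ distPD p D g₀ g₁) :
    ¬(g₀ ∈ ∑ i, A i ∧ g₁ ∈ ∑ i, A i) :=
  not_both_mem_sumset_of_dAPs_general p D k A hA g₀ g₁ hdist
end

section
/- Let p > 5 be a prime, k a positive integer with k < p/4, and g_0 ≠ g_1 elements of Z_p. Set D = ⌈2kp/(p−3)⌉ and c = ((p−1)/2)·D·(g_1 − g_0)^{−1} mod p. For any x_1, …, x_k ∈ Z_p, let b_i = ((c·x_i) mod p) mod D and let A_{(b_i)} be the D-AP in Z_p with base b_i. Then: (i) if x_1 + ⋯ + x_k = g_0 in Z_p, then c·g_0 mod p ∈ Σ_{i=1}^k A_{(b_i)}; and (ii) if x_1 + ⋯ + x_k = g_1 in Z_p, then c·g_0 mod p ∉ Σ_{i=1}^k A_{(b_i)}. -/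
/-! Write `(c x_i).val = b_i + l_i D` with `l_i ≤ (p - 1) / D`. Every element of the sumset
`Σ A_{(b_i)}` is then `Σ b_i + J D` with `J ≤ k ⌊(p - 1)/D⌋`, which the choice of `D` makes
smaller than `h = (p - 1)/2`; and `c · Σ x_i` is such an element (with `J = Σ l_i`). The choice of `c`
gives `c g₁ = c g₀ + h D`. So if `Σ x_i = g₁`, both `c g₀ = Σ b_i + J D` and
`c g₀ + h D = Σ b_i + L D` lie in the sumset; cancelling the unit `D` gives `J + h ≡ L (mod p)`,
hence `J + h = L` as both sides are below `p`, contradicting `L < h`. -/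

open Pointwise

open Finset

section DAP

variable {p D : ℕ}

theorem mem_dAP {b : ℕ} {a : ZMod p} :
    a ∈ dAP p D b ↔ ∃ j ≤ (p - 1 - b) / D, a = ((b + j * D : ℕ) : ZMod p) := by
  simp only [dAP, mem_image, mem_range, Nat.lt_add_one_iff, eq_comm]

theorem mem_dAP_val_mod [NeZero p] (z : ZMod p) : z ∈ dAP p D (z.val % D) := by
  refine mem_dAP.2 ⟨z.val / D, ?_, by rw [Nat.mod_add_div', ZMod.natCast_zmod_val]⟩
  rcases Nat.eq_zero_or_pos D with rfl | hD
  · simp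
  · have := Nat.mod_add_div' z.val D
    have := z.val_lt
    rw [Nat.le_div_iff_mul_le hD]
    omega

theorem exists_eq_of_mem_sum_dAP {ι : Type*} [DecidableEq ι] {s : Finset ι} {b : ι → ℕ}
    {a : ZMod p} (ha : a ∈ ∑ i ∈ s, dAP p D (b i)) :
    ∃ J ≤ #s * ((p - 1) / D), a = ((∑ i ∈ s, b i + J * D : ℕ) : ZMod p) := by
  induction s using Finset.induction_on generalizing a with
  | empty => exact ⟨0, Nat.zero_le _, by simpa using ha⟩
  | insert i s hi ih =>
    rw [sum_insert hi, mem_add] at ha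
    obtain ⟨u, hu, v, hv, rfl⟩ := ha
    obtain ⟨j, hj, rfl⟩ := mem_dAP.1 hu
    obtain ⟨J, hJ, rfl⟩ := ih hv
    refine ⟨j + J, ?_, ?_⟩
    · have : j ≤ (p - 1) / D := hj.trans (Nat.div_le_div_right (Nat.sub_le _ _))
      rw [card_insert_of_notMem hi]
      linarith
    · rw [sum_insert hi]
      push_cast
      ring

theorem add_mul_notMem_sum_dAP [Fact p.Prime] {ι : Type*} [DecidableEq ι] {s : Finset ι}
    {b : ι → ℕ} {a : ZMod p} {h : ℕ} (hD : 0 < D) (hDp : D < p)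
    (hs : #s * ((p - 1) / D) < h) (hhp : 2 * h < p)
    (ha : a ∈ ∑ i ∈ s, dAP p D (b i)) : a + h * D ∉ ∑ i ∈ s, dAP p D (b i) := by
  intro hah
  obtain ⟨J, hJ, rfl⟩ := exists_eq_of_mem_sum_dAP ha
  obtain ⟨L, hL, hJL⟩ := exists_eq_of_mem_sum_dAP hah
  have hD0 : (D : ZMod p) ≠ 0 := by
    rw [Ne, ZMod.natCast_eq_zero_iff]
    exact Nat.not_dvd_of_pos_of_lt hD hDp
  have hcast : ((J + h : ℕ) : ZMod p) = L :=
    mul_right_cancel₀ hD0 (by push_cast at hJL ⊢; linear_combination hJL)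
  rw [ZMod.natCast_eq_natCast_iff', Nat.mod_eq_of_lt (by omega), Nat.mod_eq_of_lt (by omega)]
    at hcast
  omega

end DAP

section Width

variable {p k : ℕ}

theorem two_mul_mul_le_ceil_mul_sub_three (hp : 3 < p) :
    2 * k * p ≤ ⌈(2 * k * p : ℚ) / ((p : ℚ) - 3)⌉₊ * (p - 3) := by
  have hp3 : ((p : ℚ) - 3) = ((p - 3 : ℕ) : ℚ) := by push_cast [Nat.cast_sub hp.le]; ring
  have hpos : (0 : ℚ) < (p - 3 : ℕ) := by exact_mod_cast Nat.sub_pos_of_lt hp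
  have := Nat.le_ceil ((2 * k * p : ℚ) / ((p : ℚ) - 3))
  rw [hp3, div_le_iff₀ hpos] at this
  rw [hp3]
  exact_mod_cast this

theorem ceil_div_sub_three_lt (hp : 5 < p) (hkp : 4 * k < p) :
    ⌈(2 * k * p : ℚ) / ((p : ℚ) - 3)⌉₊ < p := by
  have hp' : (6 : ℚ) ≤ p := by exact_mod_cast hp
  have hkp' : 4 * (k : ℚ) + 1 ≤ p := by exact_mod_cast hkp
  suffices ⌈(2 * k * p : ℚ) / ((p : ℚ) - 3)⌉₊ ≤ p - 1 by omega
  rw [Nat.ceil_le, div_le_iff₀ (by linarith), Nat.cast_sub (by omega)]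
  push_cast
  nlinarith

theorem mul_div_lt_half_of_two_mul_mul_le {D : ℕ} (hk : 0 < k) (hp : 0 < p)
    (hD : 2 * k * p ≤ D * (p - 3)) :
    k * ((p - 1) / D) < (p - 1) / 2 := by
  by_contra! hle
  have h₁ : D * ((p - 1) / 2) ≤ k * (p - 1) :=
    calc D * ((p - 1) / 2) ≤ D * (k * ((p - 1) / D)) := Nat.mul_le_mul_left _ hle
      _ = k * ((p - 1) / D * D) := by ring
      _ ≤ k * (p - 1) := Nat.mul_le_mul_left _ (Nat.div_mul_le_self _ _)
  have h₂ : D * (p - 3) ≤ 2 * (D * ((p - 1) / 2)) := by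
    rw [mul_left_comm]
    exact Nat.mul_le_mul_left _ (by omega)
  have h₃ : k * (p - 1) < k * p := Nat.mul_lt_mul_of_pos_left (by omega) hk
  linarith

end Width

/-- Correctness of the deterministic one-round Sum-Dist protocol over `ℤ_p`:
with `D = ⌈2kp/(p − 3)⌉`, `c = ((p − 1)/2)·D·(g₁ − g₀)⁻¹`, and each party
sending `b_i = ((c·x_i) mod p) mod D`, the coordinator's test
"`c·g₀ ∈ Σ_i A_{(b_i)}`" holds iff the inputs sum to `g₀` (under the promise). -/
theorem sumDist_protocol_correct (p : ℕ) [Fact p.Prime] (hp : 5 < p)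
    (k : ℕ) (hk : 0 < k) (hkp : 4 * k < p)
    (g₀ g₁ : ZMod p) (hg : g₀ ≠ g₁)
    (D : ℕ) (hD : D = ⌈(2 * k * p : ℚ) / ((p : ℚ) - 3)⌉₊)
    (c : ZMod p) (hc : c = (((p - 1) / 2 : ℕ) : ZMod p) * (D : ZMod p) * (g₁ - g₀)⁻¹)
    (x : Fin k → ZMod p) :
    ((∑ i, x i) = g₀ → c * g₀ ∈ ∑ i, dAP p D ((c * x i).val % D)) ∧
    ((∑ i, x i) = g₁ → c * g₀ ∉ ∑ i, dAP p D ((c * x i).val % D)) := by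
  have hkpD : 2 * k * p ≤ D * (p - 3) := hD ▸ two_mul_mul_le_ceil_mul_sub_three (by omega)
  have hD₀ : 0 < D := Nat.pos_of_ne_zero fun h => by
    simp only [h, zero_mul, Nat.le_zero, mul_eq_zero] at hkpD
    omega
  have hmem : ∀ g, ∑ i, x i = g → c * g ∈ ∑ i, dAP p D ((c * x i).val % D) := by
    rintro g rfl
    rw [mul_sum, ← mem_coe, coe_sum]
    exact Set.finsetSum_mem_finsetSum _ _ _ fun i _ => mem_dAP_val_mod (c * x i)
  have hshift : c * g₁ = c * g₀ + ((p - 1) / 2 : ℕ) * D := by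
    rw [hc]
    field_simp [sub_ne_zero.2 hg.symm]
    ring
  refine ⟨hmem g₀, fun h₁ h₀ => add_mul_notMem_sum_dAP hD₀ (hD ▸ ceil_div_sub_three_lt hp hkp)
    ?_ (by omega) h₀ (hshift ▸ hmem g₁ h₁)⟩
  simpa using mul_div_lt_half_of_two_mul_mul_le hk (by omega) hkpD
end

section
/- There is a universal constant C such that for every prime p, every positive integer k, and every pair of distinct elements g_0, g_1 ∈ Z_p, there exist a finite message set M with |M| ≤ C·k, encoding functions e_1, …, e_k : Z_p → M, and a decoder dec : M^k → {0,1} such that for all x_1, …, x_k ∈ Z_p: if x_1 + ⋯ + x_k = g_0 in Z_p then dec(e_1(x_1), …, e_k(x_k)) = 0, and if x_1 + ⋯ + x_k = g_1 in Z_p then dec(e_1(x_1), …, e_k(x_k)) = 1. Consequently the total communication complexity k·⌈log_2 |M|⌉ is at most k·log_2 k + C'·k for a universal constant C'. -/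
/-!
After multiplying by `(g₁ - g₀)⁻¹` the two targets become `c` and `c + 1`. Each party sends which
of `4k` equal parts of `[0, p)` contains the representative of its (rescaled) input, together
with the parity of that representative. Two inputs with the same messages then have integer
representative sums differing by less than `p / 4` and by an even number, so they cannot be
congruent to `c` and `c + 1` modulo `p`. The coordinator answers `1` exactly when some input
consistent with the messages sums to `g₁`.
-/

namespace SumDist

variable {ι G M : Type*} [Fintype ι] [AddCommMonoid G]

def Separates (e : ι → G → M) (g₀ g₁ : G) : Prop :=
  ∀ x y : ι → G, (∀ i, e i (x i) = e i (y i)) → ∑ i, x i = g₀ → ∑ i, y i ≠ g₁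

namespace Separates

variable {e : ι → G → M} {g₀ g₁ : G}

theorem exists_decoder (h : Separates e g₀ g₁) :
    ∃ dec : (ι → M) → Fin 2, ∀ x : ι → G,
      (∑ i, x i = g₀ → dec (fun i => e i (x i)) = 0) ∧
      (∑ i, x i = g₁ → dec (fun i => e i (x i)) = 1) := by
  classical
  refine ⟨fun msg => if ∃ y : ι → G, (∀ i, e i (y i) = msg i) ∧ ∑ i, y i = g₁ then 1 else 0,
    fun x => ⟨fun hx => if_neg ?_, fun hx => if_pos ⟨x, fun _ => rfl, hx⟩⟩⟩
  rintro ⟨y, hy, hy₁⟩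
  exact h x y (fun i => (hy i).symm) hx hy₁

theorem of_refines {M' : Type*} {e' : ι → G → M'} (h : Separates e g₀ g₁)
    (he : ∀ i a b, e' i a = e' i b → e i a = e i b) : Separates e' g₀ g₁ :=
  fun x y hxy => h x y fun i => he i _ _ (hxy i)

theorem comp_addMonoidHom {H : Type*} [AddCommMonoid H] {e : ι → H → M} (φ : G →+ H)
    (h : Separates e (φ g₀) (φ g₁)) : Separates (fun i => e i ∘ φ) g₀ g₁ := by
  intro x y hxy hx hy
  refine h (φ ∘ x) (φ ∘ y) hxy ?_ ?_ <;> simp only [Function.comp_apply, ← map_sum, hx, hy]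

end Separates

end SumDist

theorem Int.abs_sub_mul_lt_of_div_eq {n n' d p : ℕ} (hp : 0 < p) (h : n * d / p = n' * d / p) :
    |(n' : ℤ) - n| * d < p := by
  have hn := Nat.div_add_mod (n * d) p
  have hn' := Nat.div_add_mod (n' * d) p
  have hdiff : ((n' : ℤ) - n) * d = ((n' * d % p : ℕ) : ℤ) - (n * d % p : ℕ) := by
    rw [h] at hn
    zify at hn hn'
    push_cast
    linear_combination hn - hn'
  rw [← abs_of_nonneg (Int.natCast_nonneg d), ← abs_mul, hdiff]
  exact abs_sub_lt_of_nonneg_of_lt (by positivity) (by exact_mod_cast Nat.mod_lt _ hp)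
    (by positivity) (by exact_mod_cast Nat.mod_lt _ hp)

theorem Int.sum_not_modEq_one_of_even_of_abs_mul_lt {ι : Type*} [Fintype ι] [Nonempty ι]
    {p d : ℕ} (hp : 2 ≤ p) (hd : 4 * Fintype.card ι ≤ d) {δ : ι → ℤ} (heven : ∀ i, 2 ∣ δ i)
    (hsmall : ∀ i, |δ i| * d < p) : ¬ ∑ i, δ i ≡ 1 [ZMOD p] := by
  intro hmod
  have hsum : |∑ i, δ i| * d < Fintype.card ι * p :=
    calc |∑ i, δ i| * d ≤ ∑ i, |δ i| * d := by
          rw [← Finset.sum_mul]; gcongr; exact Finset.abs_sum_le_sum_abs _ _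
      _ < ∑ _i : ι, (p : ℤ) :=
          Finset.sum_lt_sum_of_nonempty Finset.univ_nonempty fun i _ => hsmall i
      _ = Fintype.card ι * p := by simp
  have hquarter : |∑ i, δ i| * 4 < p := by
    have hcard : (0 : ℤ) < Fintype.card ι := by exact_mod_cast Fintype.card_pos
    have hd' : (4 * Fintype.card ι : ℤ) ≤ d := by exact_mod_cast hd
    nlinarith [abs_nonneg (∑ i, δ i)]
  have hone : ∑ i, δ i = 1 := by
    have h := Int.eq_zero_of_abs_lt_dvd (Int.ModEq.dvd hmod.symm) (by
      have := abs_sub (∑ i, δ i) 1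
      have hp' : (2 : ℤ) ≤ p := by exact_mod_cast hp
      rw [abs_one] at this
      linarith)
    linarith
  have : (2 : ℤ) ∣ 1 := hone ▸ Finset.dvd_sum fun i _ => heven i
  omega

namespace SumDist

def coarseCode (p d : ℕ) (y : ZMod p) : ℕ := 2 * (y.val * d / p) + y.val % 2

variable {p d : ℕ}

theorem coarseCode_lt [NeZero p] (hd : 0 < d) (y : ZMod p) : coarseCode p d y < 2 * d := by
  have hbucket : y.val * d / p < d := by
    rw [Nat.div_lt_iff_lt_mul (NeZero.pos p), mul_comm d]
    exact Nat.mul_lt_mul_of_pos_right (ZMod.val_lt y) hd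
  unfold coarseCode
  omega

theorem two_dvd_val_sub_of_coarseCode_eq {y y' : ZMod p}
    (h : coarseCode p d y = coarseCode p d y') :
    (2 : ℤ) ∣ (y'.val : ℤ) - y.val := by
  unfold coarseCode at h
  omega

theorem abs_val_sub_mul_lt_of_coarseCode_eq [NeZero p] {y y' : ZMod p}
    (h : coarseCode p d y = coarseCode p d y') : |(y'.val : ℤ) - y.val| * d < p :=
  Int.abs_sub_mul_lt_of_div_eq (NeZero.pos p) (by unfold coarseCode at h; omega)

theorem separates_coarseCode {ι : Type*} [Fintype ι] [Nonempty ι] [Fact (1 < p)]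
    (hd : 4 * Fintype.card ι ≤ d) (c : ZMod p) :
    Separates (fun (_ : ι) => coarseCode p d) c (c + 1) := by
  intro y y' hcode hy hy'
  refine Int.sum_not_modEq_one_of_even_of_abs_mul_lt (Fact.out : 1 < p) hd
    (δ := fun i => ((y' i).val : ℤ) - (y i).val)
    (fun i => two_dvd_val_sub_of_coarseCode_eq (hcode i))
    (fun i => abs_val_sub_mul_lt_of_coarseCode_eq (hcode i)) ?_
  rw [← ZMod.intCast_eq_intCast_iff]
  push_cast
  simp only [ZMod.natCast_zmod_val, Finset.sum_sub_distrib, hy, hy', add_sub_cancel_left]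

end SumDist

theorem Nat.clog_lt_logb_add_one {b n : ℕ} (hb : 1 < b) (hn : 0 < n) :
    (Nat.clog b n : ℝ) < Real.logb b n + 1 := by
  rw [← Real.natCeil_logb_natCast]
  exact Nat.ceil_lt_add_one (Real.logb_nonneg (by exact_mod_cast hb) (by exact_mod_cast hn))

theorem Nat.clog_two_eight_mul_le {k : ℕ} (hk : 0 < k) :
    (Nat.clog 2 (8 * k) : ℝ) ≤ Real.logb 2 k + 4 := by
  have hlt := Nat.clog_lt_logb_add_one (b := 2) one_lt_two (by omega : 0 < 8 * k)
  have hlog8 : Real.logb 2 8 = 3 := by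
    rw [show (8 : ℝ) = 2 ^ (3 : ℕ) by norm_num, Real.logb_pow, Real.logb_self_eq_one one_lt_two]
    norm_num
  push_cast at hlt
  rw [Real.logb_mul (by norm_num) (by positivity), hlog8] at hlt
  linarith

open SumDist

/-- There is a universal constant `C` such that for every prime `p`, every `k ≥ 1`,
and every pair of distinct `g₀, g₁ ∈ ℤ_p`, there is a one-round deterministic
`k`-party protocol (encoders `e_i : ℤ_p → M`, decoder `dec : M^k → {0,1}`) with
message set `M` of size at most `C·k` that solves Sum-Dist relative to `g₀, g₁`;
consequently its total communication `k·⌈log₂ |M|⌉` is at most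
`k·log₂ k + C'·k` for a universal constant `C'`. -/
theorem sumDist_upper_bound :
    ∃ (C : ℕ) (C' : ℝ), 0 < C ∧
      ∀ (p : ℕ), p.Prime → ∀ (k : ℕ), 0 < k → ∀ g₀ g₁ : ZMod p, g₀ ≠ g₁ →
        ∃ (m : ℕ) (e : Fin k → ZMod p → Fin m) (dec : (Fin k → Fin m) → Fin 2),
          0 < m ∧ m ≤ C * k ∧
          (∀ x : Fin k → ZMod p,
            ((∑ i, x i) = g₀ → dec (fun i => e i (x i)) = 0) ∧
            ((∑ i, x i) = g₁ → dec (fun i => e i (x i)) = 1)) ∧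
          ((k * Nat.clog 2 m : ℕ) : ℝ) ≤ k * Real.logb 2 k + C' * k := by
  refine ⟨8, 4, by norm_num, fun p hp k hk g₀ g₁ hne => ?_⟩
  have : Fact p.Prime := ⟨hp⟩
  have : Nonempty (Fin k) := ⟨⟨0, hk⟩⟩
  set u := (g₁ - g₀)⁻¹
  have hu : u * g₁ = u * g₀ + 1 := by
    linear_combination inv_mul_cancel₀ (sub_ne_zero.mpr hne.symm)
  let e : Fin k → ZMod p → Fin (8 * k) := fun _ y =>
    ⟨coarseCode p (4 * k) (u * y), by have := coarseCode_lt (by omega : 0 < 4 * k) (u * y); omega⟩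
  have hcore : Separates (fun (_ : Fin k) => coarseCode p (4 * k)) (u * g₀) (u * g₁) :=
    hu ▸ separates_coarseCode (by simp) (u * g₀)
  have hsep : Separates e g₀ g₁ :=
    (hcore.comp_addMonoidHom (AddMonoidHom.mulLeft u)).of_refines fun _ _ _ h => congrArg Fin.val h
  obtain ⟨dec, hdec⟩ := hsep.exists_decoder
  refine ⟨8 * k, e, dec, by omega, le_rfl, hdec, ?_⟩
  push_cast
  calc (k : ℝ) * Nat.clog 2 (8 * k) ≤ k * (Real.logb 2 k + 4) := by
        gcongr; exact Nat.clog_two_eight_mul_le hk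
    _ = k * Real.logb 2 k + 4 * k := by ring
end

section
/- Let p be a prime, k > 1 an integer, and t a nonnegative integer with 2^t ≤ (k−1)/2 and 2^t ≤ p/2. Let A_1, …, A_{k−1} be nonempty subsets of Z_p with |A_i| ≥ p/2^t for each i. Then Σ_{i=1}^{k−1} A_i = Z_p. -/
open Pointwise

/-!
Iterating the Cauchy–Davenport theorem, a sum of nonempty sets `A i ⊆ ℤ_p` has at least
`min p (∑ i, (|A i| - 1) + 1)` elements. With `k - 1 ≥ 2 · 2^t` summands of size at least
`p / 2^t ≥ 2`, the sum of the `|A i| - 1` is at least `2 · 2^t (p / 2^t - 1) = 2p - 2 · 2^t ≥ p`,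
so the sumset has `p` elements.
-/

lemma Finset.nonempty_sum_of_forall_nonempty {α ι : Type*} [DecidableEq α] [AddCommMonoid α]
    (A : ι → Finset α) (hA : ∀ i, (A i).Nonempty) (s : Finset ι) :
    (∑ i ∈ s, A i).Nonempty := by
  induction s using Finset.cons_induction with
  | empty => exact Finset.singleton_nonempty 0
  | cons i s _ ih => rw [Finset.sum_cons]; exact (hA i).add ih

namespace ZMod

variable {p : ℕ} {ι : Type*}

lemma min_le_card_sum_finset (hp : p.Prime) (A : ι → Finset (ZMod p))
    (hA : ∀ i, (A i).Nonempty) (s : Finset ι) :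
    min p (∑ i ∈ s, ((A i).card - 1) + 1) ≤ (∑ i ∈ s, A i).card := by
  induction s using Finset.cons_induction with
  | empty => simp
  | cons i s _ ih =>
    rw [Finset.sum_cons, Finset.sum_cons]
    have hCD := cauchy_davenport hp (hA i) (Finset.nonempty_sum_of_forall_nonempty A hA s)
    have hpos := (hA i).card_pos
    omega

end ZMod

lemma le_sum_sub_one_of_le_mul {ι : Type*} {s : Finset ι} {f : ι → ℕ} {m p : ℕ} (hm : 0 < m)
    (hf : ∀ i ∈ s, p ≤ m * f i) (hs : 2 * m ≤ s.card) (hp : 2 * m ≤ p) :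
    p ≤ ∑ i ∈ s, (f i - 1) := by
  have hterm : ∀ i ∈ s, p - m ≤ m * (f i - 1) := fun i hi => by
    rw [Nat.mul_sub_one]; exact Nat.sub_le_sub_right (hf i hi) m
  have hsum : s.card * (p - m) ≤ m * ∑ i ∈ s, (f i - 1) := by
    rw [Finset.mul_sum, ← smul_eq_mul, ← Finset.sum_const]
    exact Finset.sum_le_sum hterm
  refine Nat.le_of_mul_le_mul_left ?_ hm
  calc m * p ≤ 2 * m * (p - m) := by
        obtain ⟨q, rfl⟩ := Nat.exists_eq_add_of_le (by omega : m ≤ p)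
        rw [Nat.add_sub_cancel_left]
        nlinarith
    _ ≤ s.card * (p - m) := Nat.mul_le_mul_right _ hs
    _ ≤ m * ∑ i ∈ s, (f i - 1) := hsum

theorem sumset_eq_univ_of_large_general (p : ℕ) [Fact p.Prime] (k : ℕ)
    (t : ℕ) (ht1 : 2 * 2 ^ t ≤ k - 1) (ht2 : 2 * 2 ^ t ≤ p)
    (A : Fin (k - 1) → Finset (ZMod p)) (hA : ∀ i, (A i).Nonempty)
    (hcard : ∀ i, (p : ℝ) / 2 ^ t ≤ ((A i).card : ℝ)) :
    (∑ i, A i) = Finset.univ := by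
  have hlarge : ∀ i ∈ Finset.univ, p ≤ 2 ^ t * (A i).card := fun i _ => by
    exact_mod_cast (div_le_iff₀' (by positivity)).1 (hcard i)
  have hsum : p ≤ ∑ i, ((A i).card - 1) :=
    le_sum_sub_one_of_le_mul (by positivity) hlarge (by simpa using ht1) ht2
  have hCD := ZMod.min_le_card_sum_finset Fact.out A hA Finset.univ
  rw [min_eq_left (by omega)] at hCD
  apply Finset.eq_univ_of_card
  rw [ZMod.card]
  exact le_antisymm (by simpa [ZMod.card] using Finset.card_le_univ (∑ i, A i)) hCD

/-- Key step of the Sum-Dist lower bound: if `2^t ≤ (k − 1)/2` and `2^t ≤ p/2`,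
and `A 1, …, A (k−1)` are nonempty subsets of `ℤ_p` each of size at least
`p/2^t`, then their sumset is all of `ℤ_p`. -/
theorem sumset_eq_univ_of_large (p : ℕ) [Fact p.Prime] (k : ℕ) (hk : 1 < k)
    (t : ℕ) (ht1 : 2 * 2 ^ t ≤ k - 1) (ht2 : 2 * 2 ^ t ≤ p)
    (A : Fin (k - 1) → Finset (ZMod p)) (hA : ∀ i, (A i).Nonempty)
    (hcard : ∀ i, (p : ℝ) / 2 ^ t ≤ ((A i).card : ℝ)) :
    (∑ i, A i) = Finset.univ :=
  sumset_eq_univ_of_large_general p k t ht1 ht2 A hA hcard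
end

section
/- Let p be a prime, k > 1 an integer, and t a nonnegative integer with 2^t ≤ (k−1)/2 and 2^t ≤ p/2 (that is, t ≤ min{log_2((k−1)/2), log_2(p/2)}). Then for any distinct g_0, g_1 ∈ Z_p there is no deterministic one-round k-party protocol with per-party communication complexity t solving Sum-Dist relative to g_0, g_1. Formally: there do not exist encoding functions e_1, …, e_k : Z_p → {0,1}^t and a decoder dec : ({0,1}^t)^k → {0,1} such that for all x_1, …, x_k ∈ Z_p, x_1 + ⋯ + x_k = g_0 implies dec(e_1(x_1), …, e_k(x_k)) = 0 and x_1 + ⋯ + x_k = g_1 implies dec(e_1(x_1), …, e_k(x_k)) = 1. -/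
/-!
Each encoder takes `p` values but only `2 ^ t` messages, so by pigeonhole party `i` has a fiber
`F i` (inputs sharing one message) with more than `(p - 1) / 2 ^ t` elements. As `k ≥ 2 · 2 ^ t`,
the excesses `|F i| - 1` add up to at least `p - 1`, and the iterated Cauchy–Davenport theorem
gives `F 1 + ⋯ + F k = ℤ_p`. Hence both `g₀` and `g₁` are sums of inputs on which every party
sends the same message, and the decoder cannot answer both correctly.
-/

open Finset Pointwise

namespace ZMod

variable {p : ℕ}

theorem min_le_card_finsetSum (hp : p.Prime) {ι : Type*} (s : Finset ι)
    {F : ι → Finset (ZMod p)} (hF : ∀ i ∈ s, (F i).Nonempty) :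
    min p (∑ i ∈ s, (#(F i) - 1) + 1) ≤ #(∑ i ∈ s, F i) := by
  classical
  induction s using Finset.induction_on with
  | empty => simp
  | insert a s ha ih =>
    have hFa := hF a (mem_insert_self a s)
    have ih := ih fun i hi => hF i (mem_insert_of_mem hi)
    have hS : (∑ i ∈ s, F i).Nonempty := by
      rw [← card_pos]
      have := hp.pos
      omega
    have hcd := cauchy_davenport hp hFa hS
    have := hFa.card_pos
    rw [sum_insert ha, sum_insert ha]
    omega

theorem exists_forall_mem_sum_eq (hp : p.Prime) {ι : Type*} [Fintype ι]
    {F : ι → Finset (ZMod p)} (hF : ∀ i, (F i).Nonempty) (hcard : p - 1 ≤ ∑ i, (#(F i) - 1))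
    (g : ZMod p) : ∃ x : ι → ZMod p, (∀ i, x i ∈ F i) ∧ ∑ i, x i = g := by
  have : NeZero p := ⟨hp.ne_zero⟩
  have hcover : ∑ i, F i = univ := by
    refine eq_univ_of_card _ (le_antisymm (card_le_univ _) ?_)
    have := min_le_card_finsetSum hp univ fun i _ => hF i
    rw [card]
    omega
  have hg : g ∈ ((∑ i, F i : Finset (ZMod p)) : Set (ZMod p)) := by simp [hcover]
  rw [coe_sum, Set.mem_fintype_sum] at hg
  obtain ⟨x, hx, hsum⟩ := hg
  exact ⟨x, hx, hsum⟩

end ZMod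

theorem Nat.le_mul_div_of_two_mul_le {m n k : ℕ} (hm : 0 < m) (hmn : m ≤ n) (hk : 2 * m ≤ k) :
    n ≤ k * (n / m) := by
  have hlt := Nat.lt_mul_div_succ n hm
  have hq : 1 ≤ n / m := Nat.div_pos hmn hm
  calc n ≤ m * (n / m) + m := by rw [mul_add_one] at hlt; omega
    _ ≤ 2 * m * (n / m) := by nlinarith
    _ ≤ k * (n / m) := Nat.mul_le_mul_right _ hk

theorem sumDist_lower_bound_general (p : ℕ) [Fact p.Prime] (k : ℕ)
    (t : ℕ) (ht1 : 2 * 2 ^ t ≤ k - 1) (ht2 : 2 * 2 ^ t ≤ p)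
    (g₀ g₁ : ZMod p) :
    ¬ ∃ (e : Fin k → ZMod p → (Fin t → Bool))
        (dec : (Fin k → (Fin t → Bool)) → Fin 2),
        ∀ x : Fin k → ZMod p,
          ((∑ i, x i) = g₀ → dec (fun i => e i (x i)) = 0) ∧
          ((∑ i, x i) = g₁ → dec (fun i => e i (x i)) = 1) := by
  rintro ⟨e, dec, hprot⟩
  have hp : p.Prime := Fact.out
  have : NeZero p := ⟨hp.ne_zero⟩
  have hm : 0 < 2 ^ t := Nat.two_pow_pos t
  obtain ⟨q, hq⟩ : ∃ q, (p - 1) / 2 ^ t = q := ⟨_, rfl⟩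
  have hfiber (i : Fin k) : ∃ y, q < #{x | e i x = y} := by
    refine Fintype.exists_lt_card_fiber_of_mul_lt_card (e i) ?_
    have := Nat.mul_div_le (p - 1) (2 ^ t)
    simp only [Fintype.card_fun, Fintype.card_bool, Fintype.card_fin, ZMod.card, hq] at this ⊢
    omega
  choose msg hmsg using hfiber
  have hcard : p - 1 ≤ ∑ i, (#{x | e i x = msg i} - 1) :=
    calc p - 1 ≤ k * q := hq ▸ Nat.le_mul_div_of_two_mul_le hm (by omega) (by omega)
      _ = ∑ _ : Fin k, q := by simp
      _ ≤ _ := sum_le_sum fun i _ => by have := hmsg i; omega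
  have hreach (g : ZMod p) : ∃ x : Fin k → ZMod p, (fun i => e i (x i)) = msg ∧ ∑ i, x i = g := by
    obtain ⟨x, hx, hsum⟩ := ZMod.exists_forall_mem_sum_eq hp
      (fun i => card_pos.1 (by have := hmsg i; omega)) hcard g
    exact ⟨x, funext fun i => (mem_filter.1 (hx i)).2, hsum⟩
  obtain ⟨x₀, hx₀, hsum₀⟩ := hreach g₀
  obtain ⟨x₁, hx₁, hsum₁⟩ := hreach g₁
  have h₀ : dec msg = 0 := hx₀ ▸ (hprot x₀).1 hsum₀
  have h₁ : dec msg = 1 := hx₁ ▸ (hprot x₁).2 hsum₁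
  exact absurd (h₀.symm.trans h₁) (by decide)

/-- Lower bound for Sum-Dist over `ℤ_p`: if `2^t ≤ (k − 1)/2` and `2^t ≤ p/2`,
then no deterministic one-round `k`-party protocol in which each party sends
`t` bits (encoders `e_i : ℤ_p → {0,1}^t`, decoder `dec : ({0,1}^t)^k → {0,1}`)
solves Sum-Dist relative to any distinct `g₀, g₁ ∈ ℤ_p`. -/
theorem sumDist_lower_bound (p : ℕ) [Fact p.Prime] (k : ℕ) (hk : 1 < k)
    (t : ℕ) (ht1 : 2 * 2 ^ t ≤ k - 1) (ht2 : 2 * 2 ^ t ≤ p)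
    (g₀ g₁ : ZMod p) (hg : g₀ ≠ g₁) :
    ¬ ∃ (e : Fin k → ZMod p → (Fin t → Bool))
        (dec : (Fin k → (Fin t → Bool)) → Fin 2),
        ∀ x : Fin k → ZMod p,
          ((∑ i, x i) = g₀ → dec (fun i => e i (x i)) = 0) ∧
          ((∑ i, x i) = g₁ → dec (fun i => e i (x i)) = 1) :=
  sumDist_lower_bound_general p k t ht1 ht2 g₀ g₁
end

section
/- Let p > 2 be a prime, D an integer with 1 ≤ D < p, and ξ ∈ (0,1). Then for any distinct g, g' ∈ Z_p, there are at least ξ·(p−1) values c ∈ Z_p with c ≠ 0 such that dist_{p,D}(c·g mod p, c·g' mod p) > (1−ξ)·(p−1)/2. -/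
theorem Set.ncard_preimage_mul_right₀ {G₀ : Type*} [GroupWithZero G₀] {u : G₀} (hu : u ≠ 0)
    (s : Set G₀) : ((· * u) ⁻¹' s).ncard = s.ncard :=
  ncard_preimage_of_injective_subset_range (mul_left_injective₀ hu)
    fun x _ => ⟨x * u⁻¹, inv_mul_cancel_right₀ hu x⟩

namespace ZMod

theorem natAbs_valMinAbs_eq_min_val_neg {n : ℕ} [NeZero n] (x : ZMod n) :
    x.valMinAbs.natAbs = min x.val (-x).val := by
  rw [valMinAbs_natAbs_eq_min, neg_val]
  split_ifs with hx <;> simp [hx]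

theorem sub_le_ncard_lt_natAbs_valMinAbs (n m : ℕ) [NeZero n] :
    n - (2 * m + 1) ≤ {x : ZMod n | m < x.valMinAbs.natAbs}.ncard := by
  have hIco : (Finset.Ico (m + 1) (n - m)).card = n - (2 * m + 1) := by
    rw [Nat.card_Ico]; omega
  rw [← hIco, ← Set.ncard_coe_finset]
  refine Set.ncard_le_ncard_of_injOn (Nat.cast : ℕ → ZMod n) ?_ ?_
  · intro a ha
    simp only [Finset.coe_Ico, Set.mem_Ico] at ha
    rw [Set.mem_ofPred_eq, valMinAbs_natAbs_eq_min, val_cast_of_lt (by omega)]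
    omega
  · intro a ha b hb hab
    simp only [Finset.coe_Ico, Set.mem_Ico] at ha hb
    rw [← val_cast_of_lt (n := n) (a := a) (by omega), hab, val_cast_of_lt (by omega)]

end ZMod

theorem distPD_eq_natAbs_valMinAbs (p D : ℕ) [NeZero p] (g₀ g₁ : ZMod p) :
    distPD p D g₀ g₁ = ((g₁ - g₀) * (D : ZMod p)⁻¹).valMinAbs.natAbs := by
  rw [ZMod.natAbs_valMinAbs_eq_min_val_neg, distPD, ← neg_mul, neg_sub]

theorem distPD_mul_mul (p D : ℕ) [NeZero p] (c g g' : ZMod p) :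
    distPD p D (c * g) (c * g') = (c * ((g' - g) * (D : ZMod p)⁻¹)).valMinAbs.natAbs := by
  rw [distPD_eq_natAbs_valMinAbs, ← mul_sub, mul_assoc]

theorem many_scales_far_general (p : ℕ) [Fact p.Prime]
    (D : ℕ) (hD1 : 1 ≤ D) (hDp : D < p)
    (ξ : ℝ) (hξ1 : ξ < 1)
    (g g' : ZMod p) (hg : g ≠ g') :
    ξ * ((p : ℝ) - 1) ≤
      (({c : ZMod p | c ≠ 0 ∧
          (1 - ξ) * ((p : ℝ) - 1) / 2 < (distPD p D (c * g) (c * g') : ℝ)}.ncard : ℕ) : ℝ) := by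
  set t := (1 - ξ) * ((p : ℝ) - 1) / 2 with ht
  have hp1 : (1 : ℝ) ≤ p := by exact_mod_cast (Fact.out : p.Prime).one_le
  have ht0 : 0 ≤ t := div_nonneg (mul_nonneg (by linarith) (by linarith)) zero_le_two
  have hD : (D : ZMod p) ≠ 0 := by
    rw [Ne, ZMod.natCast_eq_zero_iff]; exact Nat.not_dvd_of_pos_of_lt hD1 hDp
  set u := (g' - g) * (D : ZMod p)⁻¹
  have hu : u ≠ 0 := mul_ne_zero (sub_ne_zero.mpr hg.symm) (inv_ne_zero hD)
  have hset : {c : ZMod p | c ≠ 0 ∧ t < (distPD p D (c * g) (c * g') : ℝ)} =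
      (· * u) ⁻¹' {x | ⌊t⌋₊ < x.valMinAbs.natAbs} := by
    ext c
    simp only [Set.mem_ofPred_eq, Set.mem_preimage, distPD_mul_mul, ← Nat.floor_lt ht0]
    exact and_iff_right_of_imp fun h hc => by simp [hc] at h
  rw [hset, Set.ncard_preimage_mul_right₀ hu]
  have hcount : (p : ℝ) ≤ {x : ZMod p | ⌊t⌋₊ < x.valMinAbs.natAbs}.ncard + (2 * ⌊t⌋₊ + 1) := by
    exact_mod_cast Nat.sub_le_iff_le_add.mp (ZMod.sub_le_ncard_lt_natAbs_valMinAbs p ⌊t⌋₊)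
  linarith [Nat.floor_le ht0]

/-- For a prime `p > 2`, a difference `1 ≤ D < p`, `ξ ∈ (0,1)`, and distinct
`g, g' ∈ ℤ_p`, at least `ξ·(p − 1)` of the nonzero `c ∈ ℤ_p` satisfy
`dist_{p,D}(c·g, c·g') > (1 − ξ)·(p − 1)/2`. -/
theorem many_scales_far (p : ℕ) [Fact p.Prime] (hp : 2 < p)
    (D : ℕ) (hD1 : 1 ≤ D) (hDp : D < p)
    (ξ : ℝ) (hξ0 : 0 < ξ) (hξ1 : ξ < 1)
    (g g' : ZMod p) (hg : g ≠ g') :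
    ξ * ((p : ℝ) - 1) ≤
      (({c : ZMod p | c ≠ 0 ∧
          (1 - ξ) * ((p : ℝ) - 1) / 2 < (distPD p D (c * g) (c * g') : ℝ)}.ncard : ℕ) : ℝ) :=
  many_scales_far_general p D hD1 hDp ξ hξ1 g g' hg
end

section
/- Let p > 5 be a prime, k a positive integer with k < p/4, ε ∈ (2k/(p−3), 1), and g ∈ Z_p. Set D = ⌈2kp/(ε(p−3))⌉. Fix x_1, …, x_k ∈ Z_p with x_1 + ⋯ + x_k ≠ g in Z_p. For c ∈ Z_p with c ≠ 0, let b_i(c) = ((c·x_i) mod p) mod D and let A_{(b_i(c))} be the D-AP in Z_p with base b_i(c). Then the number of c ∈ Z_p \ {0} such that c·g mod p ∈ Σ_{i=1}^k A_{(b_i(c))} is at most ε·(p−1). (Moreover, if x_1 + ⋯ + x_k = g in Z_p, then c·g mod p ∈ Σ_{i=1}^k A_{(b_i(c))} for every c ≠ 0.) -/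
/-!
Write `b_i = (c x_i).val % D`. Both `c x_i` and every element of `A_{(b_i)}` are `b_i` plus a
multiple `jD` with `0 ≤ j ≤ (p - 1)/D`, so an element `y` of the sumset satisfies
`y - c Σ x_i = D t` for an integer `t` with `|t| ≤ M := k ⌊(p - 1)/D⌋`. If `c g` passes the
test, then `c (g - Σ x_i) = D t` with `t ≠ 0`; as `g - Σ x_i ≠ 0`, `c` is determined by `t`,
so at most `2M ≤ 2k(p - 1)/D ≤ ε(p - 1)` values of `c` pass. When `Σ x_i = g`, the test
point `c g = Σ c x_i` lies in the sumset because each `c x_i` lies in its own progression.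
-/

open Pointwise

namespace dAP

variable {p D b : ℕ}

lemma mem_iff {y : ZMod p} :
    y ∈ dAP p D b ↔ ∃ j ≤ (p - 1 - b) / D, ((b + j * D : ℕ) : ZMod p) = y := by
  simp only [dAP, Finset.mem_image, Finset.mem_range, Nat.lt_succ_iff]

lemma self_mem [NeZero p] (z : ZMod p) : z ∈ dAP p D (z.val % D) := by
  refine mem_iff.2 ⟨z.val / D, ?_, by rw [Nat.mod_add_div', ZMod.natCast_zmod_val]⟩
  rcases Nat.eq_zero_or_pos D with rfl | hD
  · simp
  have hz : z.val ≤ p - 1 := Nat.le_sub_one_of_lt z.val_lt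
  exact (Nat.le_div_iff_mul_le hD).2 (by have := Nat.mod_add_div' z.val D; omega)

lemma exists_sub_eq_mul_of_mem [NeZero p] {y z : ZMod p} (hy : y ∈ dAP p D (z.val % D)) :
    ∃ t : ℤ, |t| ≤ ((p - 1) / D : ℕ) ∧ y - z = D * t := by
  obtain ⟨j, hj, rfl⟩ := mem_iff.1 hy
  obtain ⟨m, hm, hz⟩ := mem_iff.1 (self_mem (D := D) z)
  have hj' : j ≤ (p - 1) / D := hj.trans (Nat.div_le_div_right (Nat.sub_le _ _))
  have hm' : m ≤ (p - 1) / D := hm.trans (Nat.div_le_div_right (Nat.sub_le _ _))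
  refine ⟨j - m, abs_le.2 ⟨by omega, by omega⟩, ?_⟩
  generalize z.val % D = b at hj hm hz
  subst hz
  push_cast
  ring

lemma exists_sub_sum_eq_mul_of_mem_sum [NeZero p] {ι : Type*} [Fintype ι] (z : ι → ZMod p)
    {y : ZMod p} (hy : y ∈ ∑ i, dAP p D ((z i).val % D)) :
    ∃ t : ℤ, |t| ≤ (Fintype.card ι * ((p - 1) / D) : ℕ) ∧ y - ∑ i, z i = D * t := by
  rw [← Finset.mem_coe, Finset.coe_sum, Set.mem_fintype_sum] at hy
  obtain ⟨a, ha, rfl⟩ := hy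
  choose t ht hat using fun i => exists_sub_eq_mul_of_mem (ha i)
  refine ⟨∑ i, t i, ?_, ?_⟩
  · calc |∑ i, t i| ≤ ∑ i, |t i| := Finset.abs_sum_le_sum_abs _ _
      _ ≤ ∑ _ : ι, (((p - 1) / D : ℕ) : ℤ) := Finset.sum_le_sum fun i _ => ht i
      _ = (Fintype.card ι * ((p - 1) / D) : ℕ) := by simp
  · rw [← Finset.sum_sub_distrib, Int.cast_sum, Finset.mul_sum]
    exact Finset.sum_congr rfl fun i _ => hat i

lemma sum_mem_sum [NeZero p] {ι : Type*} [Fintype ι] (z : ι → ZMod p) :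
    ∑ i, z i ∈ ∑ i, dAP p D ((z i).val % D) := by
  rw [← Finset.mem_coe, Finset.coe_sum]
  exact Set.finsetSum_mem_finsetSum _ _ _ fun i _ => self_mem (z i)

end dAP

/-- A nonzero `c` with `c δ = d t` for an integer `0 < |t| ≤ M` is `d t / δ`. -/
lemma ncard_setOf_mul_eq_mul_intCast_le {K : Type*} [DivisionRing K] {δ : K} (hδ : δ ≠ 0)
    (d : K) (M : ℕ) :
    {c : K | c ≠ 0 ∧ ∃ t : ℤ, |t| ≤ M ∧ c * δ = d * t}.ncard ≤ 2 * M := by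
  classical
  let T : Finset ℤ := (Finset.Icc (-(M : ℤ)) M).erase 0
  have hsub : {c : K | c ≠ 0 ∧ ∃ t : ℤ, |t| ≤ M ∧ c * δ = d * t} ⊆
      T.image fun t : ℤ => d * t * δ⁻¹ := by
    rintro c ⟨hc, t, ht, hct⟩
    have ht0 : t ≠ 0 := by
      rintro rfl
      simp [hc, hδ] at hct
    refine Finset.mem_image.2 ⟨t, Finset.mem_erase.2 ⟨ht0, Finset.mem_Icc.2 (abs_le.1 ht)⟩, ?_⟩
    rw [← hct, mul_inv_cancel_right₀ hδ]
  have hT : T.card = 2 * M := by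
    rw [Finset.card_erase_of_mem (by simp), Int.card_Icc]
    omega
  calc _ ≤ (T.image fun t : ℤ => d * t * δ⁻¹).card :=
        (Set.ncard_le_ncard hsub (Finset.finite_toSet _)).trans_eq (Set.ncard_coe_finset _)
    _ ≤ 2 * M := hT ▸ Finset.card_image_le

lemma two_mul_le_mul_ceil {k p ε : ℝ} (hk : 0 ≤ k) (hp : 3 < p) (hε : 0 < ε) :
    2 * k ≤ ε * ⌈2 * k * p / (ε * (p - 3))⌉₊ :=
  calc 2 * k ≤ 2 * k * p / (p - 3) := by
        rw [le_div_iff₀ (by linarith)]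
        nlinarith
    _ = ε * (2 * k * p / (ε * (p - 3))) := by field_simp
    _ ≤ ε * ⌈2 * k * p / (ε * (p - 3))⌉₊ := by gcongr; exact Nat.le_ceil _

lemma two_mul_mul_div_le {k n D : ℕ} {ε : ℝ} (hε : 0 ≤ ε) (h : 2 * k ≤ ε * D) :
    ((2 * (k * (n / D)) : ℕ) : ℝ) ≤ ε * n :=
  calc ((2 * (k * (n / D)) : ℕ) : ℝ) = 2 * k * ((n / D : ℕ) : ℝ) := by push_cast; ring
    _ ≤ 2 * k * (n / D) := by gcongr; exact Nat.cast_div_le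
    _ = 2 * k / D * n := by ring
    _ ≤ ε * n := by gcongr; exact div_le_of_le_mul₀ (by positivity) hε h

theorem sumEqual_protocol_correct_general (p : ℕ) [Fact p.Prime] (hp : 5 < p)
    (k : ℕ)
    (ε : ℝ) (hε1 : 2 * k / ((p : ℝ) - 3) < ε)
    (g : ZMod p)
    (D : ℕ) (hD : D = ⌈(2 * k * p : ℝ) / (ε * ((p : ℝ) - 3))⌉₊)
    (x : Fin k → ZMod p) :
    ((∑ i, x i) ≠ g →
      (({c : ZMod p | c ≠ 0 ∧
          c * g ∈ ∑ i, dAP p D ((c * x i).val % D)}.ncard : ℕ) : ℝ)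
        ≤ ε * ((p : ℝ) - 1)) ∧
    ((∑ i, x i) = g →
      ∀ c : ZMod p, c ≠ 0 → c * g ∈ ∑ i, dAP p D ((c * x i).val % D)) := by
  have hp3 : (3 : ℝ) < p := by exact_mod_cast (by omega : 3 < p)
  have hε : 0 < ε := lt_of_le_of_lt (div_nonneg (by positivity) (by linarith)) hε1
  refine ⟨fun hne => ?_, fun hsum c _ => ?_⟩
  · have hsub : {c : ZMod p | c ≠ 0 ∧ c * g ∈ ∑ i, dAP p D ((c * x i).val % D)} ⊆
        {c | c ≠ 0 ∧ ∃ t : ℤ, |t| ≤ (k * ((p - 1) / D) : ℕ) ∧ c * (g - ∑ i, x i) = D * t} := by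
      rintro c ⟨hc, hcg⟩
      obtain ⟨t, ht, hct⟩ := dAP.exists_sub_sum_eq_mul_of_mem_sum (fun i => c * x i) hcg
      exact ⟨hc, t, by simpa using ht, by rw [mul_sub, Finset.mul_sum, hct]⟩
    have hcount := (Set.ncard_le_ncard hsub).trans
      (ncard_setOf_mul_eq_mul_intCast_le (sub_ne_zero.2 (Ne.symm hne)) (D : ZMod p) _)
    have hkD : 2 * (k : ℝ) ≤ ε * D := hD ▸ two_mul_le_mul_ceil k.cast_nonneg hp3 hε
    calc _ ≤ ((2 * (k * ((p - 1) / D)) : ℕ) : ℝ) := by exact_mod_cast hcount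
      _ ≤ ε * ((p - 1 : ℕ) : ℝ) := two_mul_mul_div_le hε.le hkD
      _ = ε * ((p : ℝ) - 1) := by rw [Nat.cast_pred (by omega)]
  · rw [← hsum, Finset.mul_sum]
    exact dAP.sum_mem_sum _

/-- Correctness of the randomized one-round Sum-Equal protocol over `ℤ_p` with
public randomness `c` uniform in `ℤ_p \ {0}`: with `D = ⌈2kp/(ε(p − 3))⌉` and
`b_i(c) = ((c·x_i) mod p) mod D`, if `Σ_i x_i ≠ g` then at most `ε·(p − 1)`
nonzero values `c` make the coordinator's test `c·g ∈ Σ_i A_{(b_i(c))}` pass;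
moreover if `Σ_i x_i = g` the test passes for every `c ≠ 0`. -/
theorem sumEqual_protocol_correct (p : ℕ) [Fact p.Prime] (hp : 5 < p)
    (k : ℕ) (hk : 0 < k) (hkp : 4 * k < p)
    (ε : ℝ) (hε1 : 2 * k / ((p : ℝ) - 3) < ε) (hε2 : ε < 1)
    (g : ZMod p)
    (D : ℕ) (hD : D = ⌈(2 * k * p : ℝ) / (ε * ((p : ℝ) - 3))⌉₊)
    (x : Fin k → ZMod p) :
    ((∑ i, x i) ≠ g →
      (({c : ZMod p | c ≠ 0 ∧
          c * g ∈ ∑ i, dAP p D ((c * x i).val % D)}.ncard : ℕ) : ℝ)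
        ≤ ε * ((p : ℝ) - 1)) ∧
    ((∑ i, x i) = g →
      ∀ c : ZMod p, c ≠ 0 → c * g ∈ ∑ i, dAP p D ((c * x i).val % D)) :=
  sumEqual_protocol_correct_general p hp k ε hε1 g D hD x
end
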